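/- For any $(a,b) \in \mathbb{R}_{\geq 0}^2$ with $a, b > 0$, $a \neq b$, and $a + b \leq 4$, the maximum over $x \in [a/2, 2 - b/2]$ of $c(x) := (2 - a/x)(2 - b/(2-x))$ equals $4 + \frac{1}{2}\big(ab - 2a - 2b - \sqrt{ab(4-a)(4-b)}\big)$, attained at $x = \frac{a(4-b) - \sqrt{ab(4-a)(4-b)}}{2(a-b)}$. -/

import Mathlib

/-!
Write `s = √(ab(4-a)(4-b))`, `M` for the claimed maximum and `K = 2a + 2b + s - ab > 0`.
On `0 < x < 2` we have `c(x) = (2x - a)(2(2-x) - b) / (x(2-x))`, and using only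
`s² = ab(4-a)(4-b)` one checks that `2K (M x(2-x) - (2x-a)(2(2-x)-b)) = (Kx - (4a + s - ab))²`.
Hence `c ≤ M`, with equality at `x = (4a + s - ab)/K`, which is the stated point.
That point lies in `[a/2, 2 - b/2]` because its distances to the two endpoints are
`a(4-a)(4-a-b) / (2(a(4-a) + s))` and `b(4-b)(4-a-b) / (2(b(4-b) + s))`.
-/

namespace RepresentableTriple

/-- `c = c₂ c₃` for `a₁ = x`, `a₂ = a/x`, `b₁ = 2 - x`, `b₃ = b/(2-x)`,
`c₂ = 2 - a₂`, `c₃ = 2 - b₃`. -/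
noncomputable def c (a b x : ℝ) : ℝ := (2 - a / x) * (2 - b / (2 - x))

/-! In `maxValue` and `argmax`, `s` stands for `√(ab(4-a)(4-b))`. -/

noncomputable def maxValue (a b s : ℝ) : ℝ := 4 + 1 / 2 * (a * b - 2 * a - 2 * b - s)

noncomputable def argmax (a b s : ℝ) : ℝ := (a * (4 - b) - s) / (2 * (a - b))

theorem c_eq_div {a b x : ℝ} (hx : x ≠ 0) (hx' : 2 - x ≠ 0) :
    c a b x = (2 * x - a) * (2 * (2 - x) - b) / (x * (2 - x)) := by
  unfold c
  field_simp

theorem two_mul_add_two_mul_add_sub_mul_pos {a b s : ℝ} (ha : 0 < a) (hb : 0 < b)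
    (hab : a + b ≤ 4) (hs : 0 ≤ s) : 0 < 2 * a + 2 * b + s - a * b := by
  nlinarith [sq_nonneg (a - b), mul_pos ha hb]

section

variable {a b s : ℝ} (hs : s ^ 2 = a * b * (4 - a) * (4 - b))
include hs

theorem maxValue_mul_sub_eq_sq (x : ℝ) :
    2 * (2 * a + 2 * b + s - a * b) *
        (maxValue a b s * (x * (2 - x)) - (2 * x - a) * (2 * (2 - x) - b)) =
      ((2 * a + 2 * b + s - a * b) * x - (4 * a + s - a * b)) ^ 2 := by
  unfold maxValue
  linear_combination -hs

theorem argmax_eq (hab : a ≠ b) (hK : 2 * a + 2 * b + s - a * b ≠ 0) :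
    argmax a b s = (4 * a + s - a * b) / (2 * a + 2 * b + s - a * b) := by
  have : 2 * (a - b) ≠ 0 := mul_ne_zero two_ne_zero (sub_ne_zero.mpr hab)
  unfold argmax
  rw [div_eq_div_iff this hK]
  linear_combination -hs

theorem argmax_sub_half (hab : a ≠ b) (hd : a * (4 - a) + s ≠ 0) :
    argmax a b s - a / 2 = a * (4 - a) * (4 - a - b) / (2 * (a * (4 - a) + s)) := by
  have : a - b ≠ 0 := sub_ne_zero.mpr hab
  unfold argmax
  field_simp
  linear_combination -hs

theorem two_sub_half_sub_argmax (hab : a ≠ b) (hd : b * (4 - b) + s ≠ 0) :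
    2 - b / 2 - argmax a b s = b * (4 - b) * (4 - a - b) / (2 * (b * (4 - b) + s)) := by
  have : a - b ≠ 0 := sub_ne_zero.mpr hab
  unfold argmax
  field_simp
  linear_combination hs

theorem argmax_mem_Icc (ha : 0 < a) (hb : 0 < b) (hab : a ≠ b) (hab4 : a + b ≤ 4)
    (hs0 : 0 ≤ s) : argmax a b s ∈ Set.Icc (a / 2) (2 - b / 2) := by
  have h4a : 0 < 4 - a := by linarith
  have h4b : 0 < 4 - b := by linarith
  have h4ab : 0 ≤ 4 - a - b := by linarith
  constructor
  · rw [← sub_nonneg, argmax_sub_half hs hab (by positivity)]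
    positivity
  · rw [← sub_nonneg, two_sub_half_sub_argmax hs hab (by positivity)]
    positivity

theorem c_le_maxValue (hK : 0 < 2 * a + 2 * b + s - a * b) {x : ℝ} (hx : x ∈ Set.Ioo 0 2) :
    c a b x ≤ maxValue a b s := by
  have hgap : 0 ≤ maxValue a b s * (x * (2 - x)) - (2 * x - a) * (2 * (2 - x) - b) := by
    have h2K : (0 : ℝ) < 2 * (2 * a + 2 * b + s - a * b) := by positivity
    refine (mul_nonneg_iff_of_pos_left h2K).mp ?_
    rw [maxValue_mul_sub_eq_sq hs]
    positivity
  have hx0 : 0 < x := hx.1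
  have hx2 : 0 < 2 - x := sub_pos.mpr hx.2
  rw [c_eq_div hx0.ne' hx2.ne', div_le_iff₀ (by positivity)]
  linarith

theorem c_argmax (hab : a ≠ b) (hK : 0 < 2 * a + 2 * b + s - a * b)
    (hx : argmax a b s ∈ Set.Ioo 0 2) : c a b (argmax a b s) = maxValue a b s := by
  have hroot : (2 * a + 2 * b + s - a * b) * argmax a b s - (4 * a + s - a * b) = 0 := by
    rw [argmax_eq hs hab hK.ne', mul_div_cancel₀ _ hK.ne', sub_self]
  have hgap : maxValue a b s * (argmax a b s * (2 - argmax a b s)) -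
      (2 * argmax a b s - a) * (2 * (2 - argmax a b s) - b) = 0 := by
    have := maxValue_mul_sub_eq_sq hs (argmax a b s)
    rw [hroot, zero_pow two_ne_zero] at this
    exact (mul_eq_zero.mp this).resolve_left (by positivity)
  have hx0 : 0 < argmax a b s := hx.1
  have hx2 : 0 < 2 - argmax a b s := sub_pos.mpr hx.2
  rw [c_eq_div hx0.ne' hx2.ne', div_eq_iff (by positivity)]
  linarith

end

end RepresentableTriple

open RepresentableTriple in
theorem stmt_18 (a b : ℝ) (ha : 0 < a) (hb : 0 < b) (hne : a ≠ b) (hab : a + b ≤ 4) :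
    (a * (4 - b) - Real.sqrt (a * b * (4 - a) * (4 - b))) / (2 * (a - b)) ∈
      Set.Icc (a / 2) (2 - b / 2) ∧
    (2 - a / ((a * (4 - b) - Real.sqrt (a * b * (4 - a) * (4 - b))) / (2 * (a - b)))) *
        (2 - b / (2 - (a * (4 - b) - Real.sqrt (a * b * (4 - a) * (4 - b))) / (2 * (a - b))))
      = 4 + 1 / 2 * (a * b - 2 * a - 2 * b - Real.sqrt (a * b * (4 - a) * (4 - b))) ∧
    ∀ x ∈ Set.Icc (a / 2) (2 - b / 2),
      (2 - a / x) * (2 - b / (2 - x)) ≤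
        4 + 1 / 2 * (a * b - 2 * a - 2 * b - Real.sqrt (a * b * (4 - a) * (4 - b))) := by
  set s := Real.sqrt (a * b * (4 - a) * (4 - b))
  have hs0 : 0 ≤ s := Real.sqrt_nonneg _
  have hs : s ^ 2 = a * b * (4 - a) * (4 - b) := Real.sq_sqrt (by nlinarith [mul_pos ha hb])
  have hK := two_mul_add_two_mul_add_sub_mul_pos ha hb hab hs0
  have hIcc : Set.Icc (a / 2) (2 - b / 2) ⊆ Set.Ioo 0 2 :=
    Set.Icc_subset_Ioo (by positivity) (by linarith)
  have hmem := argmax_mem_Icc hs ha hb hne hab hs0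
  exact ⟨hmem, c_argmax hs hne hK (hIcc hmem), fun x hx => c_le_maxValue hs hK (hIcc hx)⟩
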